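/- arXiv:1805.00990 — 3 statements merged into one kernel-verified Lean document; each statement's English description precedes it below -/
import Mathlib

section
/- Let A be an arrangement of d lines that is nontrivial (not all lines pass through a common point). Then the total number of intersection points satisfies Σ_{m≥2} t_m ≥ d. -/
open scoped BigOperators

/-- Points and lines of the projective plane over `k` (lines via duality). -/
abbrev ProjPlane (k : Type*) [Field k] := Projectivization k (Fin 3 → k)

/-- Incidence between a point `p` and a line `L` (given by its dual coefficients):
all representatives pair to zero under the standard bilinear form. -/
def Incid {k : Type*} [Field k] (p L : ProjPlane k) : Prop :=
  ∀ v ∈ p.submodule, ∀ w ∈ L.submodule, ∑ i, v i * w i = 0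

/-- Number of lines of the arrangement `A` passing through the point `p`. -/
noncomputable def linesThrough {k : Type*} [Field k]
    (A : Finset (ProjPlane k)) (p : ProjPlane k) : ℕ :=
  {L : ProjPlane k | L ∈ A ∧ Incid p L}.ncard

/-- `tm A m` is the number of `m`-points of the arrangement `A`. -/
noncomputable def tm {k : Type*} [Field k]
    (A : Finset (ProjPlane k)) (m : ℕ) : ℕ :=
  {p : ProjPlane k | linesThrough A p = m}.ncard

/-- The arrangement is trivial if all its lines pass through a common point. -/
def IsTrivial {k : Type*} [Field k] (A : Finset (ProjPlane k)) : Prop :=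
  ∃ p : ProjPlane k, ∀ L ∈ A, Incid p L

/-- First Chern number of a line arrangement. -/
noncomputable def c1sq {k : Type*} [Field k] (A : Finset (ProjPlane k)) : ℤ :=
  9 - 5 * (A.card : ℤ) +
    ∑ m ∈ Finset.Icc 2 A.card, (3 * (m : ℤ) - 4) * (tm A m : ℤ)

/-- Second Chern number of a line arrangement. -/
noncomputable def c2 {k : Type*} [Field k] (A : Finset (ProjPlane k)) : ℤ :=
  3 - 2 * (A.card : ℤ) +
    ∑ m ∈ Finset.Icc 2 A.card, ((m : ℤ) - 1) * (tm A m : ℤ)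

/-!
The multiple points and the lines of a nontrivial arrangement form a nondegenerate configuration
in which any two lines meet, namely in the point given by the cross product of their coordinate
vectors. For such configurations there are at least as many points as lines
(`Configuration.HasPoints.card_le`, proved by Hall's marriage theorem), and the multiple points
are counted by `Σ_{m ≥ 2} t_m`.
-/

open Projectivization
open scoped LinearAlgebra.Projectivization

theorem Projectivization.eq_cross_of_orthogonal {F : Type*} [Field F] [DecidableEq F]
    {u v w : ℙ F (Fin 3 → F)} (h : v ≠ w) (hv : u.orthogonal v) (hw : u.orthogonal w) :
    u = cross v w := by
  induction u with | h x hx =>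
  induction v with | h y hy =>
  induction w with | h z hz =>
  rw [orthogonal_mk] at hv hw
  rw [cross_mk_of_ne hy hz h, mk_eq_mk_iff_crossProduct_eq_zero,
    cross_cross_eq_smul_sub_smul', hw, dotProduct_comm, hv, zero_smul, zero_smul, sub_zero]

section Incidence

variable {k : Type*} [Field k]

theorem incid_iff_orthogonal (p L : ProjPlane k) : Incid p L ↔ p.orthogonal L := by
  induction p using Projectivization.ind with | h v hv =>
  induction L using Projectivization.ind with | h w hw =>
  simp only [Incid, submodule_mk, Submodule.mem_span_singleton, orthogonal_mk]
  refine ⟨fun h => h v ⟨1, one_smul _ _⟩ w ⟨1, one_smul _ _⟩, ?_⟩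
  rintro h _ ⟨a, rfl⟩ _ ⟨b, rfl⟩
  change (a • v) ⬝ᵥ (b • w) = 0
  rw [smul_dotProduct, dotProduct_smul, h, smul_zero, smul_zero]

variable [DecidableEq k] {p L₁ L₂ : ProjPlane k}

theorem incid_cross_left (h : L₁ ≠ L₂) : Incid (cross L₁ L₂) L₁ :=
  (incid_iff_orthogonal _ _).2 (cross_orthogonal_left h)

theorem incid_cross_right (h : L₁ ≠ L₂) : Incid (cross L₁ L₂) L₂ :=
  (incid_iff_orthogonal _ _).2 (cross_orthogonal_right h)

theorem eq_cross_of_incid (h : L₁ ≠ L₂) (h₁ : Incid p L₁) (h₂ : Incid p L₂) :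
    p = cross L₁ L₂ :=
  eq_cross_of_orthogonal h ((incid_iff_orthogonal _ _).1 h₁) ((incid_iff_orthogonal _ _).1 h₂)

end Incidence

section Arrangement

variable {k : Type*} [Field k] (A : Finset (ProjPlane k))

def multiplePoints : Set (ProjPlane k) :=
  {p | 2 ≤ linesThrough A p}

variable {A}

theorem mem_multiplePoints_iff {p : ProjPlane k} :
    p ∈ multiplePoints A ↔ ∃ L₁ ∈ A, ∃ L₂ ∈ A, L₁ ≠ L₂ ∧ Incid p L₁ ∧ Incid p L₂ := by
  have hfin : {L | L ∈ A ∧ Incid p L}.Finite := A.finite_toSet.subset fun _ hL => hL.1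
  change 1 < {L | L ∈ A ∧ Incid p L}.ncard ↔ _
  rw [Set.one_lt_ncard hfin]
  constructor
  · rintro ⟨L₁, ⟨h₁, hp₁⟩, L₂, ⟨h₂, hp₂⟩, h⟩
    exact ⟨L₁, h₁, L₂, h₂, h, hp₁, hp₂⟩
  · rintro ⟨L₁, h₁, L₂, h₂, h, hp₁, hp₂⟩
    exact ⟨L₁, ⟨h₁, hp₁⟩, L₂, ⟨h₂, hp₂⟩, h⟩

theorem linesThrough_le_card (p : ProjPlane k) : linesThrough A p ≤ A.card :=
  (Set.ncard_le_ncard (fun _ hL => hL.1) A.finite_toSet).trans_eq (Set.ncard_coe_finset A)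

theorem exists_not_incid_of_not_isTrivial (hnt : ¬IsTrivial A) (p : ProjPlane k) :
    ∃ L ∈ A, ¬Incid p L := by
  by_contra! h
  exact hnt ⟨p, h⟩

theorem cross_mem_multiplePoints [DecidableEq k] {L₁ L₂ : ProjPlane k} (h₁ : L₁ ∈ A) (h₂ : L₂ ∈ A)
    (h : L₁ ≠ L₂) : cross L₁ L₂ ∈ multiplePoints A :=
  mem_multiplePoints_iff.2 ⟨L₁, h₁, L₂, h₂, h, incid_cross_left h, incid_cross_right h⟩

theorem multiplePoints_finite : (multiplePoints A).Finite := by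
  classical
  refine ((A ×ˢ A).finite_toSet.image fun L => cross L.1 L.2).subset fun p hp => ?_
  obtain ⟨L₁, h₁, L₂, h₂, h, hp₁, hp₂⟩ := mem_multiplePoints_iff.1 hp
  exact ⟨(L₁, L₂), Finset.mem_product.2 ⟨h₁, h₂⟩, (eq_cross_of_incid h hp₁ hp₂).symm⟩

theorem exists_mem_multiplePoints_not_incid (hd : 2 ≤ A.card) (hnt : ¬IsTrivial A)
    (L : ProjPlane k) : ∃ q ∈ multiplePoints A, ¬Incid q L := by
  classical
  obtain ⟨L', hL', hLL'⟩ := Finset.exists_mem_ne hd L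
  have hL'L : L ≠ L' := hLL'.symm
  obtain ⟨L'', hL'', hp⟩ := exists_not_incid_of_not_isTrivial hnt (cross L L')
  have hL'L'' : L' ≠ L'' := by rintro rfl; exact hp (incid_cross_right hL'L)
  refine ⟨cross L' L'', cross_mem_multiplePoints hL' hL'' hL'L'', fun hq => hp ?_⟩
  -- the point `L' ∩ L''` would also lie on `L`, hence equal `L ∩ L'`
  rw [← eq_cross_of_incid hL'L hq (incid_cross_left hL'L'')]
  exact incid_cross_right hL'L''

instance : Membership (multiplePoints A) A :=
  ⟨fun L p => Incid p.1 L.1⟩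

@[reducible]
noncomputable def multiplePointsHasPoints [DecidableEq k] (hd : 2 ≤ A.card)
    (hnt : ¬IsTrivial A) :
    Configuration.HasPoints (multiplePoints A) A where
  exists_point L := by
    obtain ⟨q, hq, hqL⟩ := exists_mem_multiplePoints_not_incid hd hnt L.1
    exact ⟨⟨q, hq⟩, hqL⟩
  exists_line p := by
    obtain ⟨L, hL, hpL⟩ := exists_not_incid_of_not_isTrivial hnt p.1
    exact ⟨⟨L, hL⟩, hpL⟩
  eq_or_eq {p₁ p₂ L₁ L₂} h₁₁ h₂₁ h₁₂ h₂₂ := by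
    refine or_iff_not_imp_right.2 fun h => Subtype.ext ?_
    rw [eq_cross_of_incid (Subtype.coe_ne_coe.2 h) h₁₁ h₁₂,
      eq_cross_of_incid (Subtype.coe_ne_coe.2 h) h₂₁ h₂₂]
  mkPoint {L₁ L₂} h :=
    ⟨cross L₁.1 L₂.1, cross_mem_multiplePoints L₁.2 L₂.2 (Subtype.coe_ne_coe.2 h)⟩
  mkPoint_ax h :=
    ⟨incid_cross_left (Subtype.coe_ne_coe.2 h), incid_cross_right (Subtype.coe_ne_coe.2 h)⟩

theorem ncard_multiplePoints :
    (multiplePoints A).ncard = ∑ m ∈ Finset.Icc 2 A.card, tm A m := by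
  rw [Set.ncard_eq_toFinset_card _ multiplePoints_finite,
    Finset.card_eq_sum_card_fiberwise (f := linesThrough A) (t := Finset.Icc 2 A.card)]
  · refine Finset.sum_congr rfl fun m hm => ?_
    have h2m := (Finset.mem_Icc.1 hm).1
    rw [tm, ← Set.ncard_coe_finset]
    congr 1
    ext p
    simp only [Finset.coe_filter, Set.Finite.mem_toFinset]
    exact ⟨And.right, fun h => ⟨(h ▸ h2m : 2 ≤ linesThrough A p), h⟩⟩
  · intro p hp
    exact Finset.mem_Icc.2
      ⟨multiplePoints_finite.mem_toFinset.1 (Finset.mem_coe.1 hp), linesThrough_le_card p⟩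

end Arrangement

/-- de Bruijn–Erdős: a nontrivial arrangement of `d` lines has at least `d`
intersection points: `Σ_{m ≥ 2} t_m ≥ d`. -/
theorem stmt_1 {k : Type*} [Field k] (A : Finset (ProjPlane k))
    (hd : 2 ≤ A.card) (hnt : ¬ IsTrivial A) :
    A.card ≤ ∑ m ∈ Finset.Icc 2 A.card, tm A m := by
  classical
  let := multiplePointsHasPoints hd hnt
  have : Fintype (multiplePoints A) := multiplePoints_finite.fintype
  calc A.card = Fintype.card A := (Fintype.card_coe A).symm
    _ ≤ Fintype.card (multiplePoints A) := Configuration.HasPoints.card_le _ _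
    _ = (multiplePoints A).ncard := by rw [← Nat.card_coe_set_eq, Nat.card_eq_fintype_card]
    _ = ∑ m ∈ Finset.Icc 2 A.card, tm A m := ncard_multiplePoints
end

section
/- If A is an arrangement of d ≥ 4 lines with t_d = t_{d−1} = 0, then both Chern numbers of A are positive: c̄₁²(A) ≥ 1 and c̄₂(A) ≥ 1. -/
open scoped BigOperators

/-!
Removing a line `L` of `A` that carries `n ≥ 3` multiple points lowers `c̄₂` by `n - 2 ≥ 1` and
`c̄₁²` by at least `2n - 5 ≥ 1`: every multiple point on `L` loses one line and a double point
disappears. To find such a line, take a point `y` of maximal multiplicity and a line `L` missing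
it: the lines through `y` cut `L` in distinct multiple points, and if `y` is only a double point
then all points are double and `L` carries `d - 1 ≥ 3` of them. If `y` is a `(d-2)`-point, what
remains after removing `L` is a quasi-trivial arrangement, whose Chern numbers are `≥ 0` (remove
its line off the pencil as well and count the centre of the pencil alone); otherwise the
remaining arrangement satisfies the hypotheses again and induction applies.
-/

namespace LineArrangement

open Finset Projectivization
open scoped Classical

variable {k : Type*} [Field k]

lemma eq_cross_of_orthogonal {u v w : ProjPlane k} (huv : u ≠ v) (hu : w.orthogonal u)
    (hv : w.orthogonal v) : w = cross u v := by
  induction u using Projectivization.ind with | h u hu0 =>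
  induction v using Projectivization.ind with | h v hv0 =>
  induction w using Projectivization.ind with | h w hw0 =>
  rw [orthogonal_mk] at hu hv
  rw [cross_mk_of_ne hu0 hv0 huv, mk_eq_mk_iff_crossProduct_eq_zero,
    cross_cross_eq_smul_sub_smul', hv, dotProduct_comm, hu, zero_smul, zero_smul, sub_zero]

lemma incid_iff_orthogonal {p L : ProjPlane k} : Incid p L ↔ p.orthogonal L := by
  induction p using Projectivization.ind with | h v hv =>
  induction L using Projectivization.ind with | h w hw =>
  rw [orthogonal_mk, Incid, submodule_mk, submodule_mk]
  constructor
  · intro h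
    exact h v (Submodule.mem_span_singleton_self v) w (Submodule.mem_span_singleton_self w)
  · rintro h _ hx _ hy
    obtain ⟨a, rfl⟩ := Submodule.mem_span_singleton.1 hx
    obtain ⟨b, rfl⟩ := Submodule.mem_span_singleton.1 hy
    change (a • v) ⬝ᵥ (b • w) = 0
    rw [smul_dotProduct, dotProduct_smul, h, smul_zero, smul_zero]

lemma incid_cross_left {L M : ProjPlane k} (h : L ≠ M) : Incid (cross L M) L :=
  incid_iff_orthogonal.2 (cross_orthogonal_left h)

lemma incid_cross_right {L M : ProjPlane k} (h : L ≠ M) : Incid (cross L M) M :=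
  incid_iff_orthogonal.2 (cross_orthogonal_right h)

lemma eq_cross_of_incid {p L M : ProjPlane k} (h : L ≠ M) (hL : Incid p L) (hM : Incid p M) :
    p = cross L M :=
  eq_cross_of_orthogonal h (incid_iff_orthogonal.1 hL) (incid_iff_orthogonal.1 hM)

lemma eq_of_incid_of_incid {p q L M : ProjPlane k} (h : p ≠ q) (hpL : Incid p L)
    (hqL : Incid q L) (hpM : Incid p M) (hqM : Incid q M) : L = M := by
  simp only [incid_iff_orthogonal, orthogonal_comm (v := p), orthogonal_comm (v := q)]
    at hpL hqL hpM hqM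
  exact (eq_cross_of_orthogonal h hpL hqL).trans (eq_cross_of_orthogonal h hpM hqM).symm

lemma linesThrough_eq_card (A : Finset (ProjPlane k)) (p : ProjPlane k) :
    linesThrough A p = #(A.filter (Incid p ·)) := by
  rw [linesThrough, ← Set.ncard_coe_finset, coe_filter]

lemma linesThrough_le_card (A : Finset (ProjPlane k)) (p : ProjPlane k) :
    linesThrough A p ≤ #A := by
  rw [linesThrough_eq_card]
  exact card_filter_le _ _

lemma linesThrough_mono {A B : Finset (ProjPlane k)} (h : A ⊆ B) (p : ProjPlane k) :
    linesThrough A p ≤ linesThrough B p := by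
  simp only [linesThrough_eq_card]
  exact card_le_card (filter_subset_filter _ h)

lemma linesThrough_erase_of_incid {A : Finset (ProjPlane k)} {L p : ProjPlane k} (hL : L ∈ A)
    (hp : Incid p L) : linesThrough (A.erase L) p = linesThrough A p - 1 := by
  rw [linesThrough_eq_card, linesThrough_eq_card, filter_erase,
    card_erase_of_mem (mem_filter.2 ⟨hL, hp⟩)]

lemma linesThrough_erase_of_not_incid {A : Finset (ProjPlane k)} {L p : ProjPlane k}
    (hp : ¬Incid p L) : linesThrough (A.erase L) p = linesThrough A p := by
  rw [linesThrough_eq_card, linesThrough_eq_card, filter_erase,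
    erase_eq_of_notMem (fun h => hp (mem_filter.1 h).2)]

lemma exists_not_incid {A : Finset (ProjPlane k)} {p : ProjPlane k}
    (h : linesThrough A p < #A) : ∃ L ∈ A, ¬Incid p L := by
  by_contra! hall
  rw [linesThrough_eq_card, filter_true_of_mem hall] at h
  exact h.false

noncomputable def multiplePoints (A : Finset (ProjPlane k)) : Finset (ProjPlane k) :=
  A.offDiag.image fun LM => cross LM.1 LM.2

noncomputable def multiplePointsOn (A : Finset (ProjPlane k)) (L : ProjPlane k) :
    Finset (ProjPlane k) :=
  (multiplePoints A).filter (Incid · L)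

lemma cross_mem_multiplePoints {A : Finset (ProjPlane k)} {L M : ProjPlane k} (hL : L ∈ A)
    (hM : M ∈ A) (h : L ≠ M) : cross L M ∈ multiplePoints A :=
  mem_image.2 ⟨(L, M), mem_offDiag.2 ⟨hL, hM, h⟩, rfl⟩

lemma cross_mem_multiplePointsOn {A : Finset (ProjPlane k)} {L M : ProjPlane k} (hL : L ∈ A)
    (hM : M ∈ A) (h : L ≠ M) : cross L M ∈ multiplePointsOn A L :=
  mem_filter.2 ⟨cross_mem_multiplePoints hL hM h, incid_cross_left h⟩

lemma mem_multiplePoints {A : Finset (ProjPlane k)} {p : ProjPlane k} :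
    p ∈ multiplePoints A ↔ 2 ≤ linesThrough A p := by
  rw [multiplePoints, mem_image, linesThrough_eq_card, Nat.succ_le_iff, one_lt_card]
  constructor
  · rintro ⟨⟨L, M⟩, hLM, rfl⟩
    obtain ⟨hL, hM, h⟩ := mem_offDiag.1 hLM
    exact ⟨L, mem_filter.2 ⟨hL, incid_cross_left h⟩, M, mem_filter.2 ⟨hM, incid_cross_right h⟩, h⟩
  · rintro ⟨L, hL, M, hM, h⟩
    rw [mem_filter] at hL hM
    exact ⟨(L, M), mem_offDiag.2 ⟨hL.1, hM.1, h⟩, (eq_cross_of_incid h hL.2 hM.2).symm⟩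

lemma multiplePoints_mono {A B : Finset (ProjPlane k)} (h : A ⊆ B) :
    multiplePoints A ⊆ multiplePoints B := fun p hp =>
  mem_multiplePoints.2 ((mem_multiplePoints.1 hp).trans (linesThrough_mono h p))

lemma exists_max_linesThrough {A : Finset (ProjPlane k)} (hA : 2 ≤ #A) :
    ∃ y, 2 ≤ linesThrough A y ∧ ∀ q, linesThrough A q ≤ linesThrough A y := by
  obtain ⟨L, hL, M, hM, h⟩ := one_lt_card.1 hA
  obtain ⟨y, hy, hmax⟩ :=
    (multiplePoints A).exists_max_image (linesThrough A) ⟨_, cross_mem_multiplePoints hL hM h⟩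
  refine ⟨y, mem_multiplePoints.1 hy, fun q => ?_⟩
  by_cases hq : q ∈ multiplePoints A
  · exact hmax q hq
  · have := mem_multiplePoints.not.1 hq
    have := mem_multiplePoints.1 hy
    omega

lemma tm_eq_card {A : Finset (ProjPlane k)} {m : ℕ} (hm : 2 ≤ m) :
    tm A m = #((multiplePoints A).filter (linesThrough A · = m)) := by
  rw [tm, ← Set.ncard_coe_finset, coe_filter]
  congr 1
  ext p
  simp only [Set.mem_ofPred_eq, mem_multiplePoints]
  omega

lemma linesThrough_ne_of_tm_eq_zero {A : Finset (ProjPlane k)} {m : ℕ} (hm : 2 ≤ m)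
    (h : tm A m = 0) (p : ProjPlane k) : linesThrough A p ≠ m := by
  intro hp
  rw [tm_eq_card hm, card_eq_zero, filter_eq_empty_iff] at h
  exact h (mem_multiplePoints.2 (hp ▸ hm)) hp

lemma sum_mul_tm (A : Finset (ProjPlane k)) (f : ℕ → ℤ) :
    ∑ m ∈ Icc 2 #A, f m * tm A m = ∑ p ∈ multiplePoints A, f (linesThrough A p) := by
  rw [← sum_fiberwise_of_maps_to (g := linesThrough A) (t := Icc 2 #A) fun p hp =>
    mem_Icc.2 ⟨mem_multiplePoints.1 hp, linesThrough_le_card A p⟩]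
  refine sum_congr rfl fun m hm => ?_
  rw [tm_eq_card (mem_Icc.1 hm).1, sum_congr rfl fun p hp => by rw [(mem_filter.1 hp).2],
    sum_const, nsmul_eq_mul, mul_comm]

-- The truncated subtractions make both summands vanish at multiplicity `≤ 1`; this is what lets
-- `sum_erase_add_le` compare sums over different sets of multiple points.
lemma chern_eq_sum (A : Finset (ProjPlane k)) :
    c1sq A = 9 - 5 * #A + ((∑ p ∈ multiplePoints A, (3 * linesThrough A p - 4) : ℕ) : ℤ) ∧
      c2 A = 3 - 2 * #A + ((∑ p ∈ multiplePoints A, (linesThrough A p - 1) : ℕ) : ℤ) := by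
  rw [c1sq, c2, Nat.cast_sum, Nat.cast_sum, ← sum_mul_tm A fun m => ((3 * m - 4 : ℕ) : ℤ),
    ← sum_mul_tm A fun m => ((m - 1 : ℕ) : ℤ)]
  constructor <;>
  · congr 1
    refine sum_congr rfl fun m hm => ?_
    have := (mem_Icc.1 hm).1
    push_cast [show 4 ≤ 3 * m by omega, show 1 ≤ m by omega]
    ring

lemma sum_erase_add_le {A : Finset (ProjPlane k)} {L : ProjPlane k} (hL : L ∈ A) (g : ℕ → ℕ)
    (c : ℕ) (hg : ∀ m, 2 ≤ m → g (m - 1) + c ≤ g m) :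
    ∑ q ∈ multiplePoints (A.erase L), g (linesThrough (A.erase L) q)
        + #(multiplePointsOn A L) * c ≤ ∑ q ∈ multiplePoints A, g (linesThrough A q) := by
  have hstep : ∀ q ∈ multiplePoints A,
      g (linesThrough (A.erase L) q) + (if Incid q L then c else 0) ≤ g (linesThrough A q) := by
    intro q hq
    split_ifs with h
    · rw [linesThrough_erase_of_incid hL h]
      exact hg _ (mem_multiplePoints.1 hq)
    · rw [linesThrough_erase_of_not_incid h, add_zero]
  calc _ ≤ ∑ q ∈ multiplePoints A, g (linesThrough (A.erase L) q)
          + ∑ q ∈ multiplePoints A, if Incid q L then c else 0 := by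
        rw [← sum_filter, sum_const, smul_eq_mul]
        exact add_le_add (sum_le_sum_of_subset (multiplePoints_mono (erase_subset L A))) le_rfl
    _ ≤ _ := by
        rw [← sum_add_distrib]
        exact sum_le_sum hstep

lemma chern_erase_le {A : Finset (ProjPlane k)} {L : ProjPlane k} (hL : L ∈ A) :
    c1sq (A.erase L) + 2 * #(multiplePointsOn A L) - 5 ≤ c1sq A ∧
      c2 (A.erase L) + #(multiplePointsOn A L) - 2 ≤ c2 A := by
  have h1 := sum_erase_add_le hL (fun m => 3 * m - 4) 2 fun m hm => by omega
  have h2 := sum_erase_add_le hL (fun m => m - 1) 1 fun m hm => by omega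
  have hcard := card_erase_of_mem hL
  have hpos := card_pos.2 ⟨L, hL⟩
  obtain ⟨hA1, hA2⟩ := chern_eq_sum A
  obtain ⟨hB1, hB2⟩ := chern_eq_sum (A.erase L)
  constructor <;> omega

lemma chern_ge_of_linesThrough {A : Finset (ProjPlane k)} {p : ProjPlane k}
    (hp : 2 ≤ linesThrough A p) :
    9 - 5 * (#A : ℤ) + (3 * linesThrough A p - 4) ≤ c1sq A ∧
      3 - 2 * (#A : ℤ) + (linesThrough A p - 1) ≤ c2 A := by
  have hmem := mem_multiplePoints.2 hp
  have h1 := single_le_sum (fun q _ => Nat.zero_le (3 * linesThrough A q - 4)) hmem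
  have h2 := single_le_sum (fun q _ => Nat.zero_le (linesThrough A q - 1)) hmem
  obtain ⟨hA1, hA2⟩ := chern_eq_sum A
  constructor <;> omega

lemma linesThrough_le_card_multiplePointsOn {A : Finset (ProjPlane k)} {L y : ProjPlane k}
    (hL : L ∈ A) (hy : ¬Incid y L) : linesThrough A y ≤ #(multiplePointsOn A L) := by
  have hne : ∀ N ∈ A.filter (Incid y ·), L ≠ N := fun N hN h => hy (h ▸ (mem_filter.1 hN).2)
  rw [linesThrough_eq_card]
  refine card_le_card_of_injOn (cross L) (fun N hN => ?_) fun N hN N' hN' h => ?_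
  · exact cross_mem_multiplePointsOn hL (mem_filter.1 hN).1 (hne N hN)
  · have hz : cross L N ≠ y := fun h' => hy (h' ▸ incid_cross_left (hne N hN))
    refine eq_of_incid_of_incid hz (incid_cross_right (hne N hN)) (mem_filter.1 hN).2 ?_
      (mem_filter.1 hN').2
    rw [h]
    exact incid_cross_right (hne N' hN')

lemma card_sub_one_le_card_multiplePointsOn {A : Finset (ProjPlane k)} {L : ProjPlane k}
    (hL : L ∈ A) (hA : ∀ q, linesThrough A q ≤ 2) : #A - 1 ≤ #(multiplePointsOn A L) := by
  rw [← card_erase_of_mem hL]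
  refine card_le_card_of_injOn (cross L) (fun N hN => ?_) fun N hN N' hN' h => ?_
  · exact cross_mem_multiplePointsOn hL (mem_erase.1 hN).2 (mem_erase.1 hN).1.symm
  · obtain ⟨hNL, hN⟩ := mem_erase.1 hN
    obtain ⟨hN'L, hN'⟩ := mem_erase.1 hN'
    by_contra hNN'
    have h3 : 2 < linesThrough A (cross L N) := by
      rw [linesThrough_eq_card, two_lt_card]
      refine ⟨L, mem_filter.2 ⟨hL, incid_cross_left hNL.symm⟩,
        N, mem_filter.2 ⟨hN, incid_cross_right hNL.symm⟩,
        N', mem_filter.2 ⟨hN', h ▸ incid_cross_right hN'L.symm⟩, hNL.symm, hN'L.symm, hNN'⟩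
    exact (hA _).not_gt h3

lemma three_le_card_multiplePointsOn {A : Finset (ProjPlane k)} {L y : ProjPlane k}
    (hA : 4 ≤ #A) (hL : L ∈ A) (hy : ¬Incid y L)
    (hmax : ∀ q, linesThrough A q ≤ linesThrough A y) : 3 ≤ #(multiplePointsOn A L) := by
  by_cases h3 : 3 ≤ linesThrough A y
  · exact h3.trans (linesThrough_le_card_multiplePointsOn hL hy)
  · have := card_sub_one_le_card_multiplePointsOn hL fun q => (hmax q).trans (by omega)
    omega

lemma chern_nonneg_of_linesThrough_add_one_eq {A : Finset (ProjPlane k)} {p : ProjPlane k}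
    (hA : 3 ≤ #A) (hp : linesThrough A p + 1 = #A) : 0 ≤ c1sq A ∧ 0 ≤ c2 A := by
  obtain ⟨M, hM, hpM⟩ := exists_not_incid (p := p) (A := A) (by omega)
  have hpencil : linesThrough (A.erase M) p = #A - 1 := by
    rw [linesThrough_erase_of_not_incid hpM]
    omega
  have hpencil_chern := chern_ge_of_linesThrough (A := A.erase M) (p := p) (by omega)
  rw [hpencil, card_erase_of_mem hM] at hpencil_chern
  have hn := linesThrough_le_card_multiplePointsOn hM hpM
  have hdel := chern_erase_le hM
  push_cast [show 1 ≤ #A by omega] at hpencil_chern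
  omega

theorem one_le_chern (A : Finset (ProjPlane k)) (hA : 4 ≤ #A)
    (hmax : ∀ q, linesThrough A q + 2 ≤ #A) : 1 ≤ c1sq A ∧ 1 ≤ c2 A := by
  induction A using Finset.strongInduction with | H A ih =>
  obtain ⟨y, hy2, hy⟩ := exists_max_linesThrough (A := A) (by omega)
  have hyA := hmax y
  obtain ⟨L, hL, hyL⟩ := exists_not_incid (by omega : linesThrough A y < #A)
  have hn := three_le_card_multiplePointsOn hA hL hyL hy
  have hdel := chern_erase_le hL
  have hcard := card_erase_of_mem hL
  have hyB := linesThrough_erase_of_not_incid (A := A) hyL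
  suffices 0 ≤ c1sq (A.erase L) ∧ 0 ≤ c2 (A.erase L) by omega
  by_cases hquasi : linesThrough A y + 2 = #A
  · exact chern_nonneg_of_linesThrough_add_one_eq (p := y) (by omega) (by omega)
  · have hmaxB : ∀ q, linesThrough (A.erase L) q + 2 ≤ #(A.erase L) := fun q => by
      have := linesThrough_mono (erase_subset L A) q
      have := hy q
      omega
    have := ih _ (erase_ssubset hL) (by omega) hmaxB
    omega

end LineArrangement

/-- An arrangement of `d ≥ 4` lines with `t_d = t_{d-1} = 0` has positive Chern
numbers: `c̄₁² ≥ 1` and `c̄₂ ≥ 1`. -/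
theorem stmt_7 {k : Type*} [Field k] (A : Finset (ProjPlane k))
    (hd : 4 ≤ A.card) (h1 : tm A A.card = 0) (h2 : tm A (A.card - 1) = 0) :
    1 ≤ c1sq A ∧ 1 ≤ c2 A := by
  refine LineArrangement.one_le_chern A hd fun q => ?_
  have := LineArrangement.linesThrough_le_card A q
  have := LineArrangement.linesThrough_ne_of_tm_eq_zero (by omega) h1 q
  have := LineArrangement.linesThrough_ne_of_tm_eq_zero (by omega) h2 q
  omega
end

section
/- The regular polygon arrangement of 2n lines (n-gon sides plus n symmetry axes) with t_2 = n, t_3 = n(n−1)/2, t_n = 1, t_m = 0 otherwise, has Chern slope c̄₁²/c̄₂ converging to 5/2 as n → ∞. -/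
/-- First Chern number of a line arrangement of `d` lines with `t m` points of
multiplicity `m`: `c̄₁² = 9 - 5d + Σ_{m≥2} (3m-4) t_m`. -/
def C1sq (d : ℕ) (t : ℕ → ℕ) : ℤ :=
  9 - 5 * (d : ℤ) + ∑ m ∈ Finset.Icc 2 d, (3 * (m : ℤ) - 4) * (t m : ℤ)

/-- Second Chern number: `c̄₂ = 3 - 2d + Σ_{m≥2} (m-1) t_m`. -/
def C2 (d : ℕ) (t : ℕ → ℕ) : ℤ :=
  3 - 2 * (d : ℤ) + ∑ m ∈ Finset.Icc 2 d, ((m : ℤ) - 1) * (t m : ℤ)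

open Filter in
/-- The regular polygon arrangements of `2n` lines (`t_2 = n`, `t_3 = n(n-1)/2`,
`t_n = 1`, `t_m = 0` otherwise) have Chern slope converging to `5/2`. -/
theorem stmt_15 (t : ℕ → ℕ → ℕ)
    (ht : ∀ n, 4 ≤ n → ∀ m, t n m =
      if m = 2 then n else if m = 3 then n * (n - 1) / 2 else if m = n then 1 else 0) :
    Tendsto (fun n => (C1sq (2 * n) (t n) : ℚ) / (C2 (2 * n) (t n) : ℚ))
      atTop (nhds (5 / 2)) := by
  have h : ∀ᶠ n in atTop,
      (C1sq (2 * n) (t n) : ℚ) / (C2 (2 * n) (t n) : ℚ) = 5 / 2 := by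
    filter_upwards [eventually_ge_atTop 4] with n hn
    have ht' := ht n hn
    have ht2 : t n 2 = n := by rw [ht']; simp
    have ht3 : t n 3 = n * (n - 1) / 2 := by rw [ht']; norm_num
    have htn : t n n = 1 := by
      rw [ht']; simp [show n ≠ 2 by omega, show n ≠ 3 by omega]
    set k : ℕ := n * (n - 1) / 2 with hk
    have hsub : ({2, 3, n} : Finset ℕ) ⊆ Finset.Icc 2 (2 * n) := by
      intro m hm
      simp only [Finset.mem_insert, Finset.mem_singleton] at hm
      rcases hm with rfl | rfl | rfl <;> simp [Finset.mem_Icc] <;> omega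
    have hzero : ∀ m ∈ Finset.Icc 2 (2 * n), m ∉ ({2, 3, n} : Finset ℕ) →
        t n m = 0 := by
      intro m _ hm
      simp only [Finset.mem_insert, Finset.mem_singleton, not_or] at hm
      rw [ht']; simp [hm.1, hm.2.1, hm.2.2]
    have hsum : ∀ f : ℕ → ℤ,
        ∑ m ∈ Finset.Icc 2 (2 * n), f m * (t n m : ℤ) =
          f 2 * (n : ℤ) + f 3 * (k : ℤ) + f n := by
      intro f
      rw [← Finset.sum_subset hsub
        (by intro m h1 h2; rw [hzero m h1 h2]; simp)]
      rw [Finset.sum_insert (by simp; omega),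
        Finset.sum_insert (by simp; omega), Finset.sum_singleton]
      rw [ht2, ht3, htn]
      push_cast
      ring
    have hC1 : (C1sq (2 * n) (t n) : ℤ) = 5 * (k : ℤ) + 5 - 5 * n := by
      unfold C1sq
      rw [hsum (fun m => 3 * (m : ℤ) - 4)]
      push_cast
      ring
    have hC2 : (C2 (2 * n) (t n) : ℤ) = 2 * (k : ℤ) + 2 - 2 * n := by
      unfold C2
      rw [hsum (fun m => (m : ℤ) - 1)]
      push_cast
      ring
    have hkn : n ≤ k := by
      rw [hk, Nat.le_div_iff_mul_le (by norm_num)]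
      exact Nat.mul_le_mul_left n (by omega)
    have hx : ((k : ℚ) + 1 - n) ≠ 0 := by
      have : (n : ℚ) ≤ (k : ℚ) := by exact_mod_cast hkn
      intro h0; linarith
    rw [hC1, hC2]
    push_cast
    rw [show (5 * (k : ℚ) + 5 - 5 * n) = 5 * ((k : ℚ) + 1 - n) by ring,
      show (2 * (k : ℚ) + 2 - 2 * n) = 2 * ((k : ℚ) + 1 - n) by ring,
      mul_div_mul_right _ _ hx]
  exact Tendsto.congr' (EventuallyEq.symm h) tendsto_const_nhds
end
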